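/- (Linear non-squeezing) Let n ≥ 1, let S be a real symplectic 2n×2n matrix (Sᵀ·J·S = J), let z₀ ∈ ℝ^{2n}, let R > 0 and r > 0, and fix an index 1 ≤ j ≤ n. Write points of ℝ^{2n} as z = (x₁,...,xₙ,p₁,...,pₙ). If for every z ∈ ℝ^{2n} with Euclidean norm |z| ≤ R the point w = S·z + z₀ satisfies w_j² + w_{n+j}² ≤ r², then R ≤ r. In other words, no affine symplectic map sends the ball B(R) into the symplectic cylinder Z_j(r) with r < R. -/

import Mathlib

open Matrix

/-- The standard symplectic `2n×2n` matrix. -/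
noncomputable def stdSymp (n : ℕ) : Matrix (Fin n ⊕ Fin n) (Fin n ⊕ Fin n) ℝ :=
  Matrix.fromBlocks 0 1 (-1) 0

/-!
A symplectic matrix `S` also satisfies `S J Sᵀ = J`, so its rows `a = S_{x_j}` and `b = S_{p_j}`
pair to `aᵀ J b = 1`; since `J` is orthogonal, Cauchy–Schwarz gives `|a|² |b|² ≥ 1`.
On the other hand the image of `B(R)` under `z ↦ a·z + c` is an interval of half-length `R |a|`,
so squeezing into `Z_j(r)` forces `R² |a|² ≤ r²` and likewise `R² |b|² ≤ r²`.
Multiplying, `R⁴ ≤ R⁴ |a|² |b|² ≤ r⁴`.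
-/

section

open Finset

theorem stdSymp_eq_neg_J (n : ℕ) : stdSymp n = -J (Fin n) ℝ := by
  simp [stdSymp, J, fromBlocks_neg]

theorem mul_stdSymp_mul_transpose {n : ℕ} {S : Matrix (Fin n ⊕ Fin n) (Fin n ⊕ Fin n) ℝ}
    (hS : Sᵀ * stdSymp n * S = stdSymp n) : S * stdSymp n * Sᵀ = stdSymp n := by
  rw [stdSymp_eq_neg_J] at hS ⊢
  have hS' : S ∈ symplecticGroup (Fin n) ℝ := by
    rw [SymplecticGroup.mem_iff']
    simpa using hS
  simpa using SymplecticGroup.mem_iff.mp hS'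

theorem stdSymp_mulVec {n : ℕ} (v : Fin n ⊕ Fin n → ℝ) :
    stdSymp n *ᵥ v = Sum.elim (fun k => v (.inr k)) (fun k => -v (.inl k)) := by
  ext (k | k) <;> simp [stdSymp, fromBlocks_mulVec, neg_mulVec]

theorem sum_sq_stdSymp_mulVec {n : ℕ} (v : Fin n ⊕ Fin n → ℝ) :
    ∑ i, (stdSymp n *ᵥ v) i ^ 2 = ∑ i, v i ^ 2 := by
  simp only [stdSymp_mulVec, Fintype.sum_sum_type, Sum.elim_inl, Sum.elim_inr, neg_sq]
  exact add_comm _ _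

theorem one_le_sum_sq_mul_sum_sq_rows {n : ℕ} {S : Matrix (Fin n ⊕ Fin n) (Fin n ⊕ Fin n) ℝ}
    (hS : Sᵀ * stdSymp n * S = stdSymp n) (j : Fin n) :
    1 ≤ (∑ i, S (.inl j) i ^ 2) * ∑ i, S (.inr j) i ^ 2 := by
  have hpair : S (.inl j) ⬝ᵥ (stdSymp n *ᵥ S (.inr j)) = 1 := by
    have := congrFun (congrFun (mul_stdSymp_mul_transpose hS) (.inl j)) (.inr j)
    simpa [mul_mul_apply, stdSymp] using this
  calc 1 = (S (.inl j) ⬝ᵥ (stdSymp n *ᵥ S (.inr j))) ^ 2 := by rw [hpair, one_pow]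
    _ ≤ (∑ i, S (.inl j) i ^ 2) * ∑ i, (stdSymp n *ᵥ S (.inr j)) i ^ 2 :=
      sum_mul_sq_le_sq_mul_sq univ _ _
    _ = _ := by rw [sum_sq_stdSymp_mulVec]

theorem sq_le_of_sq_add_le_of_sq_sub_le {x c r : ℝ} (h₁ : (c + x) ^ 2 ≤ r ^ 2)
    (h₂ : (c - x) ^ 2 ≤ r ^ 2) : x ^ 2 ≤ r ^ 2 := by
  nlinarith [sq_nonneg c]

theorem sq_mul_sum_sq_le_of_forall_sq_le {ι : Type*} [Fintype ι] (a : ι → ℝ) (c R r : ℝ)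
    (h : ∀ z : ι → ℝ, ∑ i, z i ^ 2 ≤ R ^ 2 → (a ⬝ᵥ z + c) ^ 2 ≤ r ^ 2) :
    R ^ 2 * ∑ i, a i ^ 2 ≤ r ^ 2 := by
  rcases (sum_nonneg fun i _ => sq_nonneg (a i) : 0 ≤ ∑ i, a i ^ 2).eq_or_lt with hA | hA
  · rw [← hA, mul_zero]
    positivity
  set A := ∑ i, a i ^ 2
  set t := R / √A
  have ht : t ^ 2 * A = R ^ 2 := by
    rw [div_pow, Real.sq_sqrt hA.le, div_mul_cancel₀ _ hA.ne']
  have hnorm (s : ℝ) (hs : s ^ 2 = t ^ 2) : ∑ i, (s • a) i ^ 2 ≤ R ^ 2 := by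
    simp only [Pi.smul_apply, smul_eq_mul, mul_pow, ← mul_sum, hs]
    exact ht.le
  have hdot (s : ℝ) : a ⬝ᵥ (s • a) = s * A := by
    rw [dotProduct_smul, smul_eq_mul]
    simp only [dotProduct, A, sq]
  have h₁ := h _ (hnorm t rfl)
  have h₂ := h _ (hnorm (-t) (neg_sq t))
  rw [hdot, add_comm] at h₁ h₂
  rw [neg_mul, ← sub_eq_add_neg] at h₂
  calc R ^ 2 * A = (t * A) ^ 2 := by rw [← ht]; ring
    _ ≤ r ^ 2 := sq_le_of_sq_add_le_of_sq_sub_le h₁ h₂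

theorem sq_le_sq_of_mul_le_of_mul_le {R r A B : ℝ} (hA : R ^ 2 * A ≤ r ^ 2)
    (hB : R ^ 2 * B ≤ r ^ 2) (hB0 : 0 ≤ B) (hAB : 1 ≤ A * B) : R ^ 2 ≤ r ^ 2 := by
  have : (R ^ 2) ^ 2 ≤ (r ^ 2) ^ 2 :=
    calc (R ^ 2) ^ 2 ≤ (R ^ 2) ^ 2 * (A * B) := le_mul_of_one_le_right (by positivity) hAB
      _ = (R ^ 2 * A) * (R ^ 2 * B) := by ring
      _ ≤ r ^ 2 * r ^ 2 := mul_le_mul hA hB (by positivity) (sq_nonneg r)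
      _ = (r ^ 2) ^ 2 := by ring
  exact le_of_sq_le_sq this (sq_nonneg r)

end

theorem linear_nonsqueezing_general (n : ℕ)
    (S : Matrix (Fin n ⊕ Fin n) (Fin n ⊕ Fin n) ℝ)
    (hS : Sᵀ * stdSymp n * S = stdSymp n)
    (z₀ : (Fin n ⊕ Fin n) → ℝ) (R r : ℝ) (hr : 0 < r)
    (j : Fin n)
    (hsqueeze : ∀ z : (Fin n ⊕ Fin n) → ℝ,
      (∑ i, z i ^ 2) ≤ R ^ 2 →
      ((S *ᵥ z + z₀) (Sum.inl j)) ^ 2 + ((S *ᵥ z + z₀) (Sum.inr j)) ^ 2 ≤ r ^ 2) :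
    R ≤ r := by
  have hx : R ^ 2 * ∑ i, S (.inl j) i ^ 2 ≤ r ^ 2 :=
    sq_mul_sum_sq_le_of_forall_sq_le _ (z₀ (.inl j)) R r fun z hz =>
      le_of_add_le_of_nonneg_left (hsqueeze z hz) (sq_nonneg _)
  have hp : R ^ 2 * ∑ i, S (.inr j) i ^ 2 ≤ r ^ 2 :=
    sq_mul_sum_sq_le_of_forall_sq_le _ (z₀ (.inr j)) R r fun z hz =>
      le_of_add_le_of_nonneg_right (hsqueeze z hz) (sq_nonneg _)
  have hp0 : 0 ≤ ∑ i, S (.inr j) i ^ 2 := Finset.sum_nonneg fun i _ => sq_nonneg _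
  have hsq := sq_le_sq_of_mul_le_of_mul_le hx hp hp0 (one_le_sum_sq_mul_sum_sq_rows hS j)
  exact le_of_sq_le_sq hsq hr.le

/-- Linear non-squeezing: if the affine symplectic map `z ↦ S·z + z₀` sends the
closed Euclidean ball of radius `R` into the symplectic cylinder
`{w : w_j² + w_{n+j}² ≤ r²}` based on the conjugate pair `(x_j, p_j)`,
then `R ≤ r`. -/
theorem linear_nonsqueezing (n : ℕ) (hn : 1 ≤ n)
    (S : Matrix (Fin n ⊕ Fin n) (Fin n ⊕ Fin n) ℝ)
    (hS : Sᵀ * stdSymp n * S = stdSymp n)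
    (z₀ : (Fin n ⊕ Fin n) → ℝ) (R r : ℝ) (hR : 0 < R) (hr : 0 < r)
    (j : Fin n)
    (hsqueeze : ∀ z : (Fin n ⊕ Fin n) → ℝ,
      (∑ i, z i ^ 2) ≤ R ^ 2 →
      ((S *ᵥ z + z₀) (Sum.inl j)) ^ 2 + ((S *ᵥ z + z₀) (Sum.inr j)) ^ 2 ≤ r ^ 2) :
    R ≤ r :=
  linear_nonsqueezing_general n S hS z₀ R r hr j hsqueeze
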